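/- arXiv:1701.05094 — 4 statements merged into one kernel-verified Lean document; each statement's English description precedes it below -/
import Mathlib

section
/- Let Σ be a triangulation in ℝⁿ and let O be a nonempty Σ-definable open set. Then O is join-irreducible in the lattice of Σ-definable open sets — i.e. whenever O = A ∪ B with A, B Σ-definable open sets, O = A or O = B — if and only if O = star(σ) for some σ ∈ Σ. -/
open Set

/-- A polytope in ℝⁿ: the convex hull of a finite set of points. -/
def IsPolytope {n : ℕ} (s : Set (Fin n → ℝ)) : Prop :=
  ∃ V : Finset (Fin n → ℝ), s = convexHull ℝ (V : Set (Fin n → ℝ))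

/-- A polyhedron in ℝⁿ: a finite union of polytopes. -/
def IsPolyhedron {n : ℕ} (P : Set (Fin n → ℝ)) : Prop :=
  ∃ S : Set (Set (Fin n → ℝ)), S.Finite ∧ (∀ s ∈ S, IsPolytope s) ∧ P = ⋃₀ S

/-- A simplex in ℝⁿ: the convex hull of a nonempty finite affinely independent set. -/
def IsSimplex {n : ℕ} (s : Set (Fin n → ℝ)) : Prop :=
  ∃ V : Finset (Fin n → ℝ), V.Nonempty ∧
    AffineIndependent ℝ (fun x : {x : Fin n → ℝ // x ∈ V} => x.val) ∧
    s = convexHull ℝ (V : Set (Fin n → ℝ))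

/-- `IsFaceOf s t`: `t` is a simplex with vertex set `W` and `s` is the convex hull
of a nonempty subset of `W`. -/
def IsFaceOf {n : ℕ} (s t : Set (Fin n → ℝ)) : Prop :=
  ∃ W V : Finset (Fin n → ℝ), W.Nonempty ∧
    AffineIndependent ℝ (fun x : {x : Fin n → ℝ // x ∈ W} => x.val) ∧
    t = convexHull ℝ (W : Set (Fin n → ℝ)) ∧
    V.Nonempty ∧ V ⊆ W ∧ s = convexHull ℝ (V : Set (Fin n → ℝ))

/-- A triangulation in ℝⁿ: a finite set of simplices closed under taking faces, such that
any two members intersect in a common face (or not at all). -/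
structure IsTriangulation {n : ℕ} (K : Set (Set (Fin n → ℝ))) : Prop where
  finite : K.Finite
  simplex : ∀ s ∈ K, IsSimplex s
  face_mem : ∀ s ∈ K, ∀ t, IsFaceOf t s → t ∈ K
  inter : ∀ s ∈ K, ∀ t ∈ K, s ∩ t = ∅ ∨ (IsFaceOf (s ∩ t) s ∧ IsFaceOf (s ∩ t) t)

/-- A set of simplices closed under taking faces. -/
def FaceClosed {n : ℕ} (D : Set (Set (Fin n → ℝ))) : Prop :=
  ∀ s ∈ D, ∀ t, IsFaceOf t s → t ∈ D

/-- A `K`-definable polyhedron: the union of a face-closed subset of `K`. -/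
def SigmaDefinable {n : ℕ} (K : Set (Set (Fin n → ℝ))) (C : Set (Fin n → ℝ)) : Prop :=
  ∃ D ⊆ K, FaceClosed D ∧ C = ⋃₀ D

/-- A `K`-definable open set: the complement in `|K| = ⋃₀ K` of a `K`-definable polyhedron. -/
def SigmaDefOpen {n : ℕ} (K : Set (Set (Fin n → ℝ))) (O : Set (Fin n → ℝ)) : Prop :=
  ∃ C, SigmaDefinable K C ∧ O = ⋃₀ K \ C

/-- The open star of a simplex `s` in a triangulation `K`. -/
def openStar {n : ℕ} (K : Set (Set (Fin n → ℝ))) (s : Set (Fin n → ℝ)) : Set (Fin n → ℝ) :=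
  ⋃ t ∈ {t ∈ K | s ⊆ t}, intrinsicInterior ℝ t

/-- The interior of `S` in the subspace topology of `P`, viewed as a subset of ℝⁿ. -/
def intSub {n : ℕ} (P S : Set (Fin n → ℝ)) : Set (Fin n → ℝ) :=
  Subtype.val '' interior (Subtype.val ⁻¹' S : Set P)

/-- An open subpolyhedron of a polyhedron `P`: a subset of `P` whose complement in `P`
is a polyhedron. -/
def IsOpenSubpoly {n : ℕ} (P O : Set (Fin n → ℝ)) : Prop :=
  O ⊆ P ∧ IsPolyhedron (P \ O)

/-- `s` is a simplex with exactly `k` (affinely independent) vertices. -/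
def SimplexWithCard {n : ℕ} (s : Set (Fin n → ℝ)) (k : ℕ) : Prop :=
  ∃ V : Finset (Fin n → ℝ), V.Nonempty ∧
    AffineIndependent ℝ (fun x : {x : Fin n → ℝ // x ∈ V} => x.val) ∧
    s = convexHull ℝ (V : Set (Fin n → ℝ)) ∧ V.card = k

/-- `P` contains a simplex with `d+1` affinely independent vertices, and no simplex with more;
i.e. the polyhedron `P` has dimension exactly `d`. -/
def PolyDimEq {n : ℕ} (P : Set (Fin n → ℝ)) (d : ℕ) : Prop :=
  (∃ V : Finset (Fin n → ℝ), V.Nonempty ∧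
      AffineIndependent ℝ (fun x : {x : Fin n → ℝ // x ∈ V} => x.val) ∧
      convexHull ℝ (V : Set (Fin n → ℝ)) ⊆ P ∧ V.card = d + 1) ∧
  (∀ V : Finset (Fin n → ℝ),
      AffineIndependent ℝ (fun x : {x : Fin n → ℝ // x ∈ V} => x.val) →
      convexHull ℝ (V : Set (Fin n → ℝ)) ⊆ P → V.card ≤ d + 1)

/-- The polyhedron `P` has dimension at most `d`. -/
def PolyDimLE {n : ℕ} (P : Set (Fin n → ℝ)) (d : ℕ) : Prop :=
  ∀ V : Finset (Fin n → ℝ),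
    AffineIndependent ℝ (fun x : {x : Fin n → ℝ // x ∈ V} => x.val) →
    convexHull ℝ (V : Set (Fin n → ℝ)) ⊆ P → V.card ≤ d + 1

/-- The triangulation `K` has combinatorial dimension exactly `d`. -/
def TriangDimEq {n : ℕ} (K : Set (Set (Fin n → ℝ))) (d : ℕ) : Prop :=
  (∃ s ∈ K, SimplexWithCard s (d + 1)) ∧
  (∀ s ∈ K, ∀ k, SimplexWithCard s k → k ≤ d + 1)

/-- The bounded-depth terms: `bdTerm P k V = V k ∪ (V k ⇨ bdTerm P (k-1) V)`,
where `U ⇨ W = int_P ((P \ U) ∪ W)` is the Heyting implication of open subsets of `P`. -/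
def bdTerm {n : ℕ} (P : Set (Fin n → ℝ)) :
    (k : ℕ) → (Fin (k + 1) → Set (Fin n → ℝ)) → Set (Fin n → ℝ)
  | 0, V => V 0 ∪ intSub P (P \ V 0)
  | k + 1, V => V (Fin.last (k + 1)) ∪
      intSub P ((P \ V (Fin.last (k + 1))) ∪ bdTerm P k (fun i => V i.castSucc))

/-- The finite poset `A` has depth exactly `d`: it has a chain of cardinality `d+1`
and no longer chain. -/
def depthEq (A : Type) [PartialOrder A] (d : ℕ) : Prop :=
  (∃ C : Finset A, IsChain (· ≤ ·) (C : Set A) ∧ C.card = d + 1) ∧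
  (∀ C : Finset A, IsChain (· ≤ ·) (C : Set A) → C.card ≤ d + 1)

/-- An upper set of the poset `(K, ⊆)`. -/
def UpperSetOf {n : ℕ} (K U : Set (Set (Fin n → ℝ))) : Prop :=
  U ⊆ K ∧ ∀ s ∈ U, ∀ t ∈ K, s ⊆ t → t ∈ U

/-- The map sending an upper set of a triangulation to the union of the relative
interiors of its members. -/
def gammaUp {n : ℕ} (U : Set (Set (Fin n → ℝ))) : Set (Fin n → ℝ) :=
  ⋃ s ∈ U, intrinsicInterior ℝ s

/-!
Every point of `|K|` lies in the relative interior of exactly one simplex of `K`: a face of a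
simplex that meets its relative interior is the whole simplex, by uniqueness of barycentric
coordinates. Hence `gammaUp : U ↦ ⋃ s ∈ U, rint s` is a bijection from the upper sets of `(K, ⊆)`
onto the `K`-definable open sets, taking the principal upper set of `σ` to the open star of `σ`.
An open star is join-irreducible because a point of `rint σ` lies in one of the two parts, which
then contains the whole star. Conversely, if `σ` is minimal in an upper set `U`, then `U \ {σ}` is
again an upper set and `gammaUp U = star σ ∪ gammaUp (U \ {σ})`; the second part misses `rint σ`,
so irreducibility forces `gammaUp U = star σ`.
-/

section RelativeInterior

variable {ι E : Type*} [NormedAddCommGroup E] [NormedSpace ℝ E]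

theorem intrinsicInterior_eq_interior_of_affineSpan_eq_top {s : Set E}
    (h : affineSpan ℝ s = ⊤) : intrinsicInterior ℝ s = interior s := by
  let e : affineSpan ℝ s ≃ₜ E :=
    { toFun := Subtype.val
      invFun := fun x => ⟨x, h ▸ AffineSubspace.mem_top ℝ E x⟩
      left_inv := fun _ => rfl
      right_inv := fun _ => rfl
      continuous_toFun := continuous_subtype_val
      continuous_invFun := continuous_id.subtype_mk _ }
  change e '' interior (e ⁻¹' s) = interior s
  rw [← e.preimage_interior, e.image_preimage]

theorem AffineBasis.intrinsicInterior_convexHull_map [Finite ι] {W : Type*}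
    [NormedAddCommGroup W] [NormedSpace ℝ W] (B : AffineBasis ι ℝ W) (φ : W →ᵃⁱ[ℝ] E) :
    intrinsicInterior ℝ (convexHull ℝ (range (φ ∘ B))) = φ '' {y | ∀ i, 0 < B.coord i y} := by
  rw [range_comp, ← φ.coe_toAffineMap, ← AffineMap.image_convexHull, φ.coe_toAffineMap,
    AffineIsometry.intrinsicInterior_image, intrinsicInterior_eq_interior_of_affineSpan_eq_top
      (by rw [affineSpan_convexHull, B.tot]), B.interior_convexHull]

theorem AffineIndependent.exists_affineBasis_comp_eq [Fintype ι] [Nonempty ι] {p : ι → E}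
    (hp : AffineIndependent ℝ p) :
    ∃ (W : Submodule ℝ E) (B : AffineBasis ι ℝ W) (φ : W →ᵃⁱ[ℝ] E), ⇑φ ∘ ⇑B = p := by
  obtain ⟨i₀⟩ := ‹Nonempty ι›
  let W := vectorSpan ℝ (range p)
  let φ : W →ᵃⁱ[ℝ] E :=
    (AffineIsometryEquiv.vaddConst ℝ (p i₀)).toAffineIsometry.comp W.subtypeₗᵢ.toAffineIsometry
  let b : ι → W := fun i =>
    ⟨p i -ᵥ p i₀, vsub_mem_vectorSpan ℝ (mem_range_self i) (mem_range_self i₀)⟩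
  have hφb : ⇑φ ∘ b = p := funext fun i => by simp [φ, b]
  have hb : AffineIndependent ℝ b := AffineIndependent.of_comp φ.toAffineMap (by
    rwa [φ.coe_toAffineMap, hφb])
  have hcard : Fintype.card ι = (Fintype.card ι - 1) + 1 :=
    (Nat.sub_add_cancel Fintype.card_pos).symm
  -- `b` spans `W` by counting dimensions: both have `card ι - 1`.
  have hspan : affineSpan ℝ (range b) = ⊤ := by
    rw [hb.affineSpan_eq_top_iff_card_eq_finrank_add_one, hp.finrank_vectorSpan hcard]
    exact hcard
  exact ⟨W, ⟨b, hb, hspan⟩, φ, hφb⟩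

theorem AffineIndependent.mem_intrinsicInterior_convexHull_iff [Fintype ι] [Nonempty ι]
    {p : ι → E} (hp : AffineIndependent ℝ p) {x : E} :
    x ∈ intrinsicInterior ℝ (convexHull ℝ (range p)) ↔
      ∃ w : ι → ℝ, (∀ i, 0 < w i) ∧ ∑ i, w i = 1 ∧ ∑ i, w i • p i = x := by
  obtain ⟨W, B, φ, rfl⟩ := hp.exists_affineBasis_comp_eq
  have hcomb : ∀ w : ι → ℝ, ∑ i, w i = 1 →
      φ (Finset.univ.affineCombination ℝ B w) = ∑ i, w i • (φ ∘ B) i := fun w hw => by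
    rw [← φ.coe_toAffineMap, Finset.map_affineCombination _ _ _ hw,
      Finset.affineCombination_eq_linear_combination _ _ _ hw]
  rw [B.intrinsicInterior_convexHull_map φ]
  constructor
  · rintro ⟨y, hy, rfl⟩
    refine ⟨fun i => B.coord i y, hy, B.sum_coord_apply_eq_one y, ?_⟩
    rw [← hcomb _ (B.sum_coord_apply_eq_one y), B.affineCombination_coord_eq_self]
  · rintro ⟨w, hw, hw1, rfl⟩
    refine ⟨Finset.univ.affineCombination ℝ B w, fun i => ?_, hcomb w hw1⟩
    rw [B.coord_apply_combination_of_mem (Finset.mem_univ i) hw1]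
    exact hw i

theorem Finset.mem_intrinsicInterior_convexHull_iff {V : Finset E}
    (hV : AffineIndependent ℝ ((↑) : V → E)) {x : E} :
    x ∈ intrinsicInterior ℝ (convexHull ℝ (V : Set E)) ↔
      ∃ w : E → ℝ, (∀ v ∈ V, 0 < w v) ∧ ∑ v ∈ V, w v = 1 ∧ ∑ v ∈ V, w v • v = x := by
  classical
  rcases V.eq_empty_or_nonempty with rfl | hne
  · simp
  have : Nonempty V := hne.to_subtype
  have hrange : Set.range ((↑) : V → E) = V := by simp
  rw [← hrange, hV.mem_intrinsicInterior_convexHull_iff]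
  constructor
  · rintro ⟨w, hw, hw1, hwx⟩
    refine ⟨fun v => if h : v ∈ V then w ⟨v, h⟩ else 0, fun v hv => by simpa [hv] using hw ⟨v, hv⟩,
      ?_, ?_⟩
    · rw [← Finset.sum_coe_sort V, ← hw1]; simp
    · rw [← Finset.sum_coe_sort V, ← hwx]; simp
  · rintro ⟨w, hw, hw1, hwx⟩
    exact ⟨fun v => w v, fun v => hw v v.2, by rwa [Finset.sum_coe_sort V w],
      by rw [Finset.sum_coe_sort V (fun v => w v • v)]; exact hwx⟩

theorem AffineIndependent.subset_of_mem_intrinsicInterior_convexHull {V U : Finset E}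
    (hV : AffineIndependent ℝ ((↑) : V → E)) (hUV : U ⊆ V) {x : E}
    (hxV : x ∈ intrinsicInterior ℝ (convexHull ℝ (V : Set E)))
    (hxU : x ∈ convexHull ℝ (U : Set E)) : V ⊆ U := by
  classical
  obtain ⟨w, hw, hw1, hwx⟩ := (Finset.mem_intrinsicInterior_convexHull_iff hV).1 hxV
  obtain ⟨u, -, hu1, hux⟩ := Finset.mem_convexHull'.1 hxU
  have hwu := hV.eq_of_sum_eq_sum_subtype (w₁ := w) (w₂ := fun v => if v ∈ U then u v else 0)
    (by simp [Finset.sum_ite_mem, Finset.inter_eq_right.2 hUV, hw1, hu1])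
    (by simp [ite_smul, Finset.sum_ite_mem, Finset.inter_eq_right.2 hUV, hwx, hux])
  intro v hv
  by_contra hvU
  exact (hw v hv).ne' (by simpa [hvU] using hwu v hv)

theorem AffineIndependent.exists_subset_mem_intrinsicInterior_convexHull {V : Finset E}
    (hV : AffineIndependent ℝ ((↑) : V → E)) {x : E} (hx : x ∈ convexHull ℝ (V : Set E)) :
    ∃ U ⊆ V, x ∈ intrinsicInterior ℝ (convexHull ℝ (U : Set E)) := by
  obtain ⟨w, hw0, hw1, hwx⟩ := Finset.mem_convexHull'.1 hx
  have hpos : ∀ v ∈ V, w v ≠ 0 → 0 < w v := fun v hv hv0 => (hw0 v hv).lt_of_ne' hv0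
  refine ⟨V.filter (0 < w ·), Finset.filter_subset _ _,
    (Finset.mem_intrinsicInterior_convexHull_iff
      (hV.mono (Finset.coe_subset.2 (Finset.filter_subset _ _)))).2
      ⟨w, fun v hv => (Finset.mem_filter.1 hv).2, ?_, ?_⟩⟩
  · rwa [Finset.sum_filter_of_ne hpos]
  · rwa [Finset.sum_filter_of_ne fun v hv hv0 => hpos v hv (left_ne_zero_of_smul hv0)]

end RelativeInterior

section Triangulation

variable {n : ℕ} {K U D : Set (Set (Fin n → ℝ))} {O s t σ : Set (Fin n → ℝ)} {x : Fin n → ℝ}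

theorem IsFaceOf.subset (h : IsFaceOf s t) : s ⊆ t := by
  obtain ⟨W, V, -, -, rfl, -, hVW, rfl⟩ := h
  exact convexHull_mono (Finset.coe_subset.2 hVW)

theorem IsSimplex.intrinsicInterior_nonempty (h : IsSimplex s) :
    (intrinsicInterior ℝ s).Nonempty := by
  obtain ⟨V, ⟨v, hv⟩, -, rfl⟩ := h
  exact (intrinsicInterior_nonempty (convex_convexHull ℝ _)).2 ⟨v, subset_convexHull ℝ _ hv⟩

theorem UpperSetOf.diff_singleton_of_minimal (hU : UpperSetOf K U) (hσ : Minimal (· ∈ U) σ) :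
    UpperSetOf K (U \ {σ}) :=
  ⟨sdiff_subset.trans hU.1, fun s ⟨hsU, hsσ⟩ t ht hst =>
    ⟨hU.2 s hsU t ht hst, fun htσ => hsσ (hσ.eq_of_le hsU (htσ ▸ hst))⟩⟩

theorem upperSetOf_setOf_subset : UpperSetOf K {t ∈ K | σ ⊆ t} :=
  ⟨fun _ ht => ht.1, fun _ ⟨_, hσs⟩ _ ht hst => ⟨ht, hσs.trans hst⟩⟩

theorem intrinsicInterior_subset_openStar (hσ : σ ∈ K) :
    intrinsicInterior ℝ σ ⊆ openStar K σ :=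
  subset_biUnion_of_mem (u := fun t => intrinsicInterior ℝ t) ⟨hσ, subset_rfl⟩

theorem openStar_subset_gammaUp (hU : UpperSetOf K U) (hσ : σ ∈ U) :
    openStar K σ ⊆ gammaUp U :=
  biUnion_subset_biUnion_left fun t ⟨ht, hσt⟩ => hU.2 σ hσ t ht hσt

theorem gammaUp_eq_openStar_union_diff (hU : UpperSetOf K U) (hσ : σ ∈ U) :
    gammaUp U = openStar K σ ∪ gammaUp (U \ {σ}) := by
  refine Subset.antisymm (fun x hx => ?_)
    (union_subset (openStar_subset_gammaUp hU hσ) (biUnion_subset_biUnion_left sdiff_subset))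
  obtain ⟨s, hs, hxs⟩ := mem_iUnion₂.1 hx
  by_cases hsσ : s = σ
  · exact Or.inl (intrinsicInterior_subset_openStar (hU.1 hσ) (hsσ ▸ hxs))
  · exact Or.inr (mem_iUnion₂.2 ⟨s, ⟨hs, hsσ⟩, hxs⟩)

namespace IsTriangulation

theorem isFaceOf_of_subset (hK : IsTriangulation K) (hs : s ∈ K) (ht : t ∈ K) (hst : s ⊆ t) :
    IsFaceOf s t := by
  rcases hK.inter s hs t ht with h | ⟨-, h⟩
  · obtain ⟨x, hx⟩ := (hK.simplex s hs).intrinsicInterior_nonempty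
    rw [inter_eq_left.2 hst] at h
    exact absurd (intrinsicInterior_subset hx) (h ▸ notMem_empty x)
  · rwa [inter_eq_left.2 hst] at h

theorem subset_of_mem_intrinsicInterior (hK : IsTriangulation K) (hs : s ∈ K) (ht : t ∈ K)
    (hxs : x ∈ intrinsicInterior ℝ s) (hxt : x ∈ t) : s ⊆ t := by
  have hx : x ∈ s ∩ t := ⟨intrinsicInterior_subset hxs, hxt⟩
  rcases hK.inter s hs t ht with h | ⟨⟨W, V, -, hW, rfl, -, hVW, hst⟩, -⟩
  · exact absurd (h ▸ hx) (notMem_empty x)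
  · calc convexHull ℝ (W : Set (Fin n → ℝ))
        ⊆ convexHull ℝ (V : Set (Fin n → ℝ)) :=
          convexHull_mono (Finset.coe_subset.2
            (hW.subset_of_mem_intrinsicInterior_convexHull hVW hxs (hst ▸ hx)))
      _ = convexHull ℝ (W : Set (Fin n → ℝ)) ∩ t := hst.symm
      _ ⊆ t := inter_subset_right

theorem eq_of_mem_intrinsicInterior (hK : IsTriangulation K) (hs : s ∈ K) (ht : t ∈ K)
    (hxs : x ∈ intrinsicInterior ℝ s) (hxt : x ∈ intrinsicInterior ℝ t) : s = t :=
  (hK.subset_of_mem_intrinsicInterior hs ht hxs (intrinsicInterior_subset hxt)).antisymm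
    (hK.subset_of_mem_intrinsicInterior ht hs hxt (intrinsicInterior_subset hxs))

theorem exists_mem_intrinsicInterior (hK : IsTriangulation K) (hx : x ∈ ⋃₀ K) :
    ∃ s ∈ K, x ∈ intrinsicInterior ℝ s := by
  obtain ⟨t, ht, hxt⟩ := hx
  obtain ⟨V, hVne, hV, rfl⟩ := hK.simplex t ht
  obtain ⟨U, hUV, hxU⟩ := hV.exists_subset_mem_intrinsicInterior_convexHull hxt
  have hU : U.Nonempty :=
    Finset.coe_nonempty.1 (convexHull_nonempty_iff.1 ⟨x, intrinsicInterior_subset hxU⟩)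
  exact ⟨_, hK.face_mem _ ht _ ⟨V, U, hVne, hV, rfl, hU, hUV, rfl⟩, hxU⟩

theorem mem_sUnion_iff (hK : IsTriangulation K) (hD : D ⊆ K) (hDf : FaceClosed D)
    (hs : s ∈ K) (hx : x ∈ intrinsicInterior ℝ s) : x ∈ ⋃₀ D ↔ s ∈ D :=
  ⟨fun ⟨t, htD, hxt⟩ => hDf t htD s (hK.isFaceOf_of_subset hs (hD htD)
      (hK.subset_of_mem_intrinsicInterior hs (hD htD) hx hxt)),
    fun hsD => ⟨s, hsD, intrinsicInterior_subset hx⟩⟩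

theorem mem_gammaUp_iff (hK : IsTriangulation K) (hU : U ⊆ K) (hs : s ∈ K)
    (hx : x ∈ intrinsicInterior ℝ s) : x ∈ gammaUp U ↔ s ∈ U :=
  ⟨fun h => by
    obtain ⟨t, htU, hxt⟩ := mem_iUnion₂.1 h
    rwa [hK.eq_of_mem_intrinsicInterior hs (hU htU) hx hxt],
    fun hsU => mem_iUnion₂.2 ⟨s, hsU, hx⟩⟩

theorem sUnion_diff_sUnion_eq_gammaUp (hK : IsTriangulation K) (hD : D ⊆ K)
    (hDf : FaceClosed D) : ⋃₀ K \ ⋃₀ D = gammaUp (K \ D) := by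
  ext x
  constructor
  · rintro ⟨hxK, hxD⟩
    obtain ⟨s, hs, hxs⟩ := hK.exists_mem_intrinsicInterior hxK
    exact mem_iUnion₂.2 ⟨s, ⟨hs, fun hsD => hxD ((hK.mem_sUnion_iff hD hDf hs hxs).2 hsD)⟩, hxs⟩
  · intro hx
    obtain ⟨s, ⟨hs, hsD⟩, hxs⟩ := mem_iUnion₂.1 hx
    exact ⟨⟨s, hs, intrinsicInterior_subset hxs⟩,
      fun hxD => hsD ((hK.mem_sUnion_iff hD hDf hs hxs).1 hxD)⟩

theorem sigmaDefOpen_iff (hK : IsTriangulation K) :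
    SigmaDefOpen K O ↔ ∃ U, UpperSetOf K U ∧ O = gammaUp U := by
  constructor
  · rintro ⟨_, ⟨D, hD, hDf, rfl⟩, rfl⟩
    refine ⟨K \ D, ⟨sdiff_subset, fun s ⟨hs, hsD⟩ t ht hst => ⟨ht, fun htD => hsD ?_⟩⟩,
      hK.sUnion_diff_sUnion_eq_gammaUp hD hDf⟩
    exact hDf t htD s (hK.isFaceOf_of_subset hs ht hst)
  · rintro ⟨U, ⟨hUK, hU⟩, rfl⟩
    have hDf : FaceClosed (K \ U) := fun s ⟨hs, hsU⟩ t hts =>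
      ⟨hK.face_mem s hs t hts, fun htU => hsU (hU t htU s hs hts.subset)⟩
    refine ⟨_, ⟨K \ U, sdiff_subset, hDf, rfl⟩, ?_⟩
    rw [hK.sUnion_diff_sUnion_eq_gammaUp sdiff_subset hDf, sdiff_sdiff_cancel_left hUK]

theorem sigmaDefOpen_openStar (hK : IsTriangulation K) : SigmaDefOpen K (openStar K σ) :=
  hK.sigmaDefOpen_iff.2 ⟨_, upperSetOf_setOf_subset, rfl⟩

theorem openStar_subset_of_mem_intrinsicInterior (hK : IsTriangulation K)
    (hO : SigmaDefOpen K O) (hσ : σ ∈ K) (hx : x ∈ intrinsicInterior ℝ σ) (hxO : x ∈ O) :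
    openStar K σ ⊆ O := by
  obtain ⟨U, hU, rfl⟩ := hK.sigmaDefOpen_iff.1 hO
  exact openStar_subset_gammaUp hU ((hK.mem_gammaUp_iff hU.1 hσ hx).1 hxO)

end IsTriangulation

end Triangulation

/-- A nonempty `K`-definable open set `O` is join-irreducible in the
lattice of `K`-definable open sets iff `O` is the open star of some simplex of `K`. -/
theorem joinIrreducible_iff_openStar {n : ℕ} (K : Set (Set (Fin n → ℝ)))
    (hK : IsTriangulation K)
    (O : Set (Fin n → ℝ)) (hO : SigmaDefOpen K O) (hne : O.Nonempty) :
    (∀ A B : Set (Fin n → ℝ), SigmaDefOpen K A → SigmaDefOpen K B →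
        O = A ∪ B → O = A ∨ O = B) ↔ ∃ s ∈ K, O = openStar K s := by
  constructor
  · intro hirr
    obtain ⟨U, hU, rfl⟩ := hK.sigmaDefOpen_iff.1 hO
    have hUne : U.Nonempty := by
      obtain ⟨x, hx⟩ := hne
      obtain ⟨s, hs, -⟩ := mem_iUnion₂.1 hx
      exact ⟨s, hs⟩
    obtain ⟨σ, hσ⟩ := (hK.finite.subset hU.1).exists_minimal hUne
    have hσK : σ ∈ K := hU.1 hσ.prop
    have hU' := hU.diff_singleton_of_minimal hσ
    rcases hirr _ _ hK.sigmaDefOpen_openStar (hK.sigmaDefOpen_iff.2 ⟨_, hU', rfl⟩)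
      (gammaUp_eq_openStar_union_diff hU hσ.prop) with h | h
    · exact ⟨σ, hσK, h⟩
    · obtain ⟨x, hx⟩ := (hK.simplex σ hσK).intrinsicInterior_nonempty
      have hxU : x ∈ gammaUp (U \ {σ}) :=
        h ▸ openStar_subset_gammaUp hU hσ.prop (intrinsicInterior_subset_openStar hσK hx)
      exact absurd rfl ((hK.mem_gammaUp_iff hU'.1 hσK hx).1 hxU).2
  · rintro ⟨σ, hσ, rfl⟩ A B hA hB hAB
    obtain ⟨x, hx⟩ := (hK.simplex σ hσ).intrinsicInterior_nonempty
    rcases hAB ▸ intrinsicInterior_subset_openStar hσ hx with hxA | hxB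
    · exact Or.inl ((hK.openStar_subset_of_mem_intrinsicInterior hA hσ hx hxA).antisymm
        (hAB ▸ subset_union_left))
    · exact Or.inr ((hK.openStar_subset_of_mem_intrinsicInterior hB hσ hx hxB).antisymm
        (hAB ▸ subset_union_right))
end

section
/- Let P ⊆ ℝⁿ be a nonempty polyhedron with dim P = d, and let d' be an integer with 0 ≤ d' < d. Define, for open subsets V₀,…,V_k of P, the bounded-depth terms B₀(V₀) = V₀ ∪ int_P(P \ V₀) and B_k(V₀,…,V_k) = V_k ∪ (V_k ⇨ B_{k−1}(V₀,…,V_{k−1})), where U ⇨ W = int_P((P \ U) ∪ W) and int_P is interior in the subspace P. Then there exist open subpolyhedra U₀,…,U_{d'} of P with B_{d'}(U₀,…,U_{d'}) ≠ P. -/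
open Set

/-!
Choose affinely independent `v₀, …, v_d` spanning a simplex inside `P` and let
`F_j = conv (v₀, …, v_j)`. Take `U_i = P \ F_{d'-i}`. By induction on `k`, the term `B_k` misses
`F_{d'-k}`: a point `x ∈ F_j` is not in `U_k = P \ F_j`, and it is not in the `P`-interior of
`(P \ U_k) ∪ B_{k-1} = F_j ∪ B_{k-1}`, since it is a limit of points of `F_{j+1} \ F_j`
(on the segment from `x` towards `v_{j+1}`), which lie neither in `F_j` nor, inductively, in
`B_{k-1} ⊆ P \ F_{j+1}`. For `k = d'` this shows `v₀ ∉ B_{d'}`, although `v₀ ∈ P`.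
-/

open Filter Topology

lemma notMem_intSub_of_mem_closure {n : ℕ} {P S A : Set (Fin n → ℝ)} {x : Fin n → ℝ}
    (hAP : A ⊆ P) (hAS : Disjoint A S) (hx : x ∈ closure A) : x ∉ intSub P S := by
  rintro ⟨z, hz, rfl⟩
  have hzA : z ∈ closure (Subtype.val ⁻¹' A : Set P) := by
    rwa [IsInducing.subtypeVal.closure_eq_preimage_closure_image, Subtype.image_preimage_coe,
      inter_eq_right.2 hAP]
  obtain ⟨w, hwS, hwA⟩ := mem_closure_iff.1 hzA _ isOpen_interior hz
  exact hAS.ne_of_mem hwA (interior_subset hwS : w ∈ Subtype.val ⁻¹' S) rfl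

lemma AffineSubspace.mem_of_lineMap_mem {k V P : Type*} [Field k] [AddCommGroup V] [Module k V]
    [AddTorsor V P] {A : AffineSubspace k P} {x w : P} {t : k} (ht : t ≠ 0) (hx : x ∈ A)
    (h : AffineMap.lineMap x w t ∈ A) : w ∈ A := by
  simpa [ht] using AffineMap.lineMap_mem t⁻¹ hx h

section Flag

variable {E : Type*} [AddCommGroup E] [Module ℝ E] {d : ℕ}

def hullUpTo (v : Fin (d + 1) → E) (j : ℕ) : Set E :=
  convexHull ℝ (v '' {i | (i : ℕ) ≤ j})

lemma hullUpTo_mono (v : Fin (d + 1) → E) {j j' : ℕ} (h : j ≤ j') :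
    hullUpTo v j ⊆ hullUpTo v j' :=
  convexHull_mono (image_mono fun _ hi => le_trans hi h)

lemma apply_mem_hullUpTo (v : Fin (d + 1) → E) (i : Fin (d + 1)) : v i ∈ hullUpTo v i :=
  subset_convexHull ℝ _ ⟨i, le_refl (i : ℕ), rfl⟩

lemma hullUpTo_subset_convexHull_range (v : Fin (d + 1) → E) (j : ℕ) :
    hullUpTo v j ⊆ convexHull ℝ (range v) :=
  convexHull_mono (image_subset_range _ _)

lemma lineMap_notMem_hullUpTo {v : Fin (d + 1) → E} (hv : AffineIndependent ℝ v) {j : ℕ}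
    (hj : j < d) {x : E} (hx : x ∈ hullUpTo v j) {t : ℝ} (ht : t ≠ 0) :
    AffineMap.lineMap x (v ⟨j + 1, by omega⟩) t ∉ hullUpTo v j := fun h => by
  have hspan := AffineSubspace.mem_of_lineMap_mem ht (convexHull_subset_affineSpan _ hx)
    (convexHull_subset_affineSpan _ h)
  simp [hv.mem_affineSpan_iff] at hspan

lemma hullUpTo_subset_closure_diff [TopologicalSpace E] [IsTopologicalAddGroup E]
    [ContinuousSMul ℝ E] {v : Fin (d + 1) → E} (hv : AffineIndependent ℝ v) {j : ℕ}
    (hj : j < d) : hullUpTo v j ⊆ closure (hullUpTo v (j + 1) \ hullUpTo v j) := by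
  intro x hx
  set w := v ⟨j + 1, by omega⟩
  have hw : w ∈ hullUpTo v (j + 1) := apply_mem_hullUpTo v ⟨j + 1, by omega⟩
  have hlim : Tendsto (AffineMap.lineMap x w) (𝓝[>] (0 : ℝ)) (𝓝 x) := by
    simpa using ((AffineMap.lineMap_continuous (p := x) (q := w)).tendsto (0 : ℝ)).mono_left
      nhdsWithin_le_nhds
  refine mem_closure_of_tendsto hlim ?_
  filter_upwards [Ioc_mem_nhdsGT one_pos] with t ht
  exact ⟨(convex_convexHull ℝ _).lineMap_mem (hullUpTo_mono v j.le_succ hx) hw ⟨ht.1.le, ht.2⟩,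
    lineMap_notMem_hullUpTo hv hj hx ht.1.ne'⟩

end Flag

section BoundedDepth

variable {n d : ℕ} {P : Set (Fin n → ℝ)} {v : Fin (d + 1) → (Fin n → ℝ)}

lemma isPolyhedron_hullUpTo (v : Fin (d + 1) → (Fin n → ℝ)) (j : ℕ) :
    IsPolyhedron (hullUpTo v j) := by
  refine ⟨{hullUpTo v j}, finite_singleton _, ?_, (sUnion_singleton _).symm⟩
  rintro s rfl
  exact ⟨(toFinite (v '' {i | (i : ℕ) ≤ j})).toFinset, by rw [Finite.coe_toFinset]; rfl⟩

lemma PolyDimEq.exists_affineIndependent (h : PolyDimEq P d) :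
    ∃ v : Fin (d + 1) → (Fin n → ℝ), AffineIndependent ℝ v ∧ convexHull ℝ (range v) ⊆ P := by
  obtain ⟨⟨V, -, hV, hVP, hcard⟩, -⟩ := h
  let e : Fin (d + 1) ≃ V := (finCongr hcard.symm).trans V.equivFin.symm
  refine ⟨fun i => e i, hV.comp_embedding e.toEmbedding, (convexHull_mono ?_).trans hVP⟩
  rintro _ ⟨i, rfl⟩
  exact (e i).2

lemma notMem_intSub_of_mem_hullUpTo (hv : AffineIndependent ℝ v)
    (hvP : convexHull ℝ (range v) ⊆ P) {j : ℕ} (hj : j < d) {x : Fin n → ℝ}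
    (hx : x ∈ hullUpTo v j) {S : Set (Fin n → ℝ)}
    (hS : Disjoint (hullUpTo v (j + 1) \ hullUpTo v j) S) : x ∉ intSub P S :=
  notMem_intSub_of_mem_closure
    (sdiff_subset.trans ((hullUpTo_subset_convexHull_range v _).trans hvP)) hS
    (hullUpTo_subset_closure_diff hv hj hx)

lemma notMem_bdTerm_of_mem_hullUpTo (hv : AffineIndependent ℝ v)
    (hvP : convexHull ℝ (range v) ⊆ P) (k j : ℕ) (hjk : j + k < d)
    (U : Fin (k + 1) → Set (Fin n → ℝ)) (hU : ∀ i, U i = P \ hullUpTo v (j + k - i))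
    {x : Fin n → ℝ} (hx : x ∈ hullUpTo v j) : x ∉ bdTerm P k U := by
  have hFP : ∀ j, P \ (P \ hullUpTo v j) = hullUpTo v j := fun j =>
    sdiff_sdiff_cancel_left ((hullUpTo_subset_convexHull_range v j).trans hvP)
  induction k generalizing j x with
  | zero =>
    rw [bdTerm, show U 0 = P \ hullUpTo v j by simpa using hU 0, hFP]
    rintro (h | h)
    · exact h.2 hx
    · exact notMem_intSub_of_mem_hullUpTo hv hvP (by omega) hx disjoint_sdiff_left h
  | succ k ih =>
    have hB : ∀ y ∈ hullUpTo v (j + 1), y ∉ bdTerm P k (fun i => U i.castSucc) :=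
      fun y hy => ih (j + 1) (by omega) _ (fun i => by rw [hU]; congr 3; omega) hy
    rw [bdTerm, show U (Fin.last (k + 1)) = P \ hullUpTo v j by simpa using hU (Fin.last _), hFP]
    rintro (h | h)
    · exact h.2 hx
    · refine notMem_intSub_of_mem_hullUpTo hv hvP (by omega) hx (disjoint_left.2 ?_) h
      rintro y ⟨hy, hyF⟩ (hyF' | hyB)
      exacts [hyF hyF', hB y hy hyB]

end BoundedDepth

theorem bd_fails_of_lt_dim_general {n d d' : ℕ} (P : Set (Fin n → ℝ))
    (hdim : PolyDimEq P d) (hd' : d' < d) :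
    ∃ U : Fin (d' + 1) → Set (Fin n → ℝ),
      (∀ i, IsOpenSubpoly P (U i)) ∧ bdTerm P d' U ≠ P := by
  obtain ⟨v, hv, hvP⟩ := hdim.exists_affineIndependent
  have hFP : ∀ j, hullUpTo v j ⊆ P := fun j => (hullUpTo_subset_convexHull_range v j).trans hvP
  have hv₀ : v 0 ∈ hullUpTo v 0 := apply_mem_hullUpTo v 0
  refine ⟨fun i => P \ hullUpTo v (d' - i), fun i => ⟨sdiff_subset, ?_⟩, fun h => ?_⟩
  · rw [sdiff_sdiff_cancel_left (hFP _)]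
    exact isPolyhedron_hullUpTo v _
  · exact notMem_bdTerm_of_mem_hullUpTo hv hvP d' 0 (by omega) (fun i => P \ hullUpTo v (d' - i))
      (fun i => by rw [zero_add]) hv₀ (h.symm ▸ hFP 0 hv₀)

/-- Let `P ⊆ ℝⁿ` be a nonempty polyhedron of dimension exactly `d`, and
let `d' < d`.  Then there are open subpolyhedra `U₀, …, U_{d'}` of `P` on which the
bounded-depth term `B_{d'}` does not evaluate to `P`. -/
theorem bd_fails_of_lt_dim {n d d' : ℕ} (P : Set (Fin n → ℝ)) (hP : IsPolyhedron P)
    (hne : P.Nonempty) (hdim : PolyDimEq P d) (hd' : d' < d) :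
    ∃ U : Fin (d' + 1) → Set (Fin n → ℝ),
      (∀ i, IsOpenSubpoly P (U i)) ∧ bdTerm P d' U ≠ P :=
  bd_fails_of_lt_dim_general P hdim hd'
end

section
/- Let A be a finite nonempty poset and let N(A) be its nerve, the set of nonempty chains of A partially ordered by inclusion. The map f : N(A) → A sending a chain C to its maximum element max C is monotone, surjective, and satisfies f '' {D ∈ N(A) : C ⊆ D} = {a ∈ A : f(C) ≤ a} for every C ∈ N(A); that is, f is a surjective p-morphism from N(A) onto A. -/
open Set

theorem IsChain.exists_isGreatest {α : Type*} [Preorder α] {s : Set α}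
    (hs : IsChain (· ≤ ·) s) (hfin : s.Finite) (hne : s.Nonempty) : ∃ a, IsGreatest s a := by
  obtain ⟨m, hm⟩ := hfin.exists_maximal hne
  refine ⟨m, hm.prop, fun x hx => ?_⟩
  rcases eq_or_ne x m with rfl | hxm
  · exact le_rfl
  · exact (hs hx hm.prop hxm).elim id (hm.le_of_ge hx)

abbrev Nerve (A : Type*) [Preorder A] :=
  {C : Finset A // C.Nonempty ∧ IsChain (· ≤ ·) (C : Set A)}

namespace Nerve

variable {A : Type*}

section Preorder

variable [Preorder A]

noncomputable def max (C : Nerve A) : A :=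
  (C.2.2.exists_isGreatest C.1.finite_toSet (Finset.coe_nonempty.mpr C.2.1)).choose

theorem isGreatest_max (C : Nerve A) : IsGreatest (C.1 : Set A) C.max :=
  (C.2.2.exists_isGreatest C.1.finite_toSet (Finset.coe_nonempty.mpr C.2.1)).choose_spec

theorem max_mem (C : Nerve A) : C.max ∈ C.1 :=
  C.isGreatest_max.1

theorem le_max (C : Nerve A) {x : A} (hx : x ∈ C.1) : x ≤ C.max :=
  C.isGreatest_max.2 hx

theorem max_mono {C D : Nerve A} (h : C.1 ⊆ D.1) : C.max ≤ D.max :=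
  D.le_max (h C.max_mem)

def singleton (a : A) : Nerve A :=
  ⟨{a}, Finset.singleton_nonempty a, by simp⟩

theorem max_singleton (a : A) : (singleton a).max = a :=
  Finset.mem_singleton.mp (singleton a).max_mem

def insert [DecidableEq A] (C : Nerve A) (a : A) (ha : C.max ≤ a) : Nerve A :=
  ⟨Insert.insert a C.1, Finset.insert_nonempty a C.1, by
    rw [Finset.coe_insert]
    exact C.2.2.insert fun b hb _ => .inr ((C.le_max hb).trans ha)⟩

end Preorder

variable [PartialOrder A]

theorem max_insert [DecidableEq A] (C : Nerve A) (a : A) (ha : C.max ≤ a) :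
    (C.insert a ha).max = a := by
  refine le_antisymm ?_ ((C.insert a ha).le_max (Finset.mem_insert_self a C.1))
  rcases Finset.mem_insert.mp (C.insert a ha).max_mem with h | h
  · exact h.le
  · exact (C.le_max h).trans ha

theorem max_image_superset (C : Nerve A) : max '' {D | C.1 ⊆ D.1} = Set.Ici C.max := by
  classical
  refine Set.Subset.antisymm ?_ fun a ha => ?_
  · rintro _ ⟨D, hCD, rfl⟩
    exact max_mono hCD
  · exact ⟨C.insert a ha, Finset.subset_insert a C.1, C.max_insert a ha⟩

end Nerve

theorem nerve_pmorphism_general {A : Type} [PartialOrder A] :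
    ∃ f : {C : Finset A // C.Nonempty ∧ IsChain (· ≤ ·) (C : Set A)} → A,
      (∀ C, f C ∈ C.val ∧ ∀ x ∈ C.val, x ≤ f C) ∧
      (∀ C D, C.val ⊆ D.val → f C ≤ f D) ∧
      Function.Surjective f ∧
      (∀ C, f '' {D | C.val ⊆ D.val} = {a | f C ≤ a}) :=
  ⟨Nerve.max, Nerve.isGreatest_max, fun _ _ => Nerve.max_mono,
    fun a => ⟨Nerve.singleton a, Nerve.max_singleton a⟩, Nerve.max_image_superset⟩

/-- For a finite nonempty poset `A`, the map `f` from the nerve of `A`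
(the nonempty chains of `A`, ordered by inclusion) to `A` sending a chain to its maximum
element is monotone, surjective, and satisfies `f '' ↑C = ↑(f C)` for every chain `C`;
i.e. `f` is a surjective p-morphism from `N(A)` onto `A`. -/
theorem nerve_pmorphism {A : Type} [PartialOrder A] [Fintype A] [Nonempty A] :
    ∃ f : {C : Finset A // C.Nonempty ∧ IsChain (· ≤ ·) (C : Set A)} → A,
      (∀ C, f C ∈ C.val ∧ ∀ x ∈ C.val, x ≤ f C) ∧
      (∀ C D, C.val ⊆ D.val → f C ≤ f D) ∧
      Function.Surjective f ∧
      (∀ C, f '' {D | C.val ⊆ D.val} = {a | f C ≤ a}) :=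
  nerve_pmorphism_general
end

section
/- For every finite nonempty poset A there exist n ∈ ℕ, a polyhedron P ⊆ ℝⁿ with dim P = depth A, and an injective map g from the upper sets of A to the open subpolyhedra of P such that g(∅) = ∅, g(A) = P, g(U ∪ V) = g(U) ∪ g(V), g(U ∩ V) = g(U) ∩ g(V), and g(U ⇨ V) = int_P((P \ g(U)) ∪ g(V)) for all upper sets U, V of A, where U ⇨ V denotes the Heyting implication of upper sets (the largest upper set W of A with U ∩ W ⊆ V) and int_P is interior in the subspace P. In other words, the Heyting algebra of upper sets of A embeds into the Heyting algebra of open subpolyhedra of a polyhedron of dimension equal to the depth of A. -/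
open Set

/-!
The polyhedron is the geometric realization of the order complex of `A`: the points of the
standard simplex on the vertex set `A` whose support is a chain. An upper set `U` goes to the
union of the open stars of its vertices, i.e. to the points whose support meets `U`. Its
complement is the realization of the order complex of `Uᶜ`, which makes it an open
subpolyhedron. Binary meets are preserved because supports are chains, and the dimension is the
depth because every simplex in `P` lies in the face spanned by a chain, namely the support of its
barycenter. For the Heyting implication
`U ⇨ V`, suppose `x` is interior to `(P \ g U) ∪ g V` but not in `g (U ⇨ V)`. Then above the
largest element of the support of `x` there is some `b ∈ U \ V`. Moving `x` slightly towards the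
vertex `b` gives points of `g U \ g V` arbitrarily close to `x`, a contradiction.
-/

theorem IsPolyhedron.isClosed {n : ℕ} {P : Set (Fin n → ℝ)} (hP : IsPolyhedron P) :
    IsClosed P := by
  obtain ⟨S, hS, hpoly, rfl⟩ := hP
  rw [sUnion_eq_biUnion]
  refine hS.isClosed_biUnion fun s hs => ?_
  obtain ⟨V, rfl⟩ := hpoly s hs
  exact (V.finite_toSet.isCompact_convexHull ℝ).isClosed

theorem intSub_mono {n : ℕ} {P S T : Set (Fin n → ℝ)} (h : S ⊆ T) :
    intSub P S ⊆ intSub P T :=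
  image_mono (interior_mono (preimage_mono h))

theorem intSub_subset {n : ℕ} (P S : Set (Fin n → ℝ)) : intSub P S ⊆ P :=
  Subtype.coe_image_subset P _

theorem diff_subset_intSub_diff {n : ℕ} {P K : Set (Fin n → ℝ)} (hK : IsClosed K) :
    P \ K ⊆ intSub P (P \ K) := by
  intro x hx
  have hopen : IsOpen (Subtype.val ⁻¹' Kᶜ : Set P) :=
    hK.isOpen_compl.preimage continuous_subtype_val
  have hsub : (Subtype.val ⁻¹' Kᶜ : Set P) ⊆ Subtype.val ⁻¹' (P \ K) :=
    fun y hy => ⟨y.2, hy⟩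
  exact ⟨⟨x, hx.1⟩, hopen.subset_interior_iff.2 hsub hx.2, rfl⟩

theorem inter_nonempty_of_mem_intSub {n : ℕ} {P S T : Set (Fin n → ℝ)} {x : Fin n → ℝ}
    (hx : x ∈ intSub P S) (hTP : T ⊆ P) (hxT : x ∈ closure T) : (T ∩ S).Nonempty := by
  obtain ⟨x, hxS, rfl⟩ := hx
  have hT : x ∈ closure (Subtype.val ⁻¹' T : Set P) := by
    rwa [closure_subtype, Subtype.image_preimage_coe, inter_eq_right.2 hTP]
  obtain ⟨y, hyS, hyT⟩ := mem_closure_iff_nhds.1 hT _ (isOpen_interior.mem_nhds hxS)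
  exact ⟨y, hyT, interior_subset (s := Subtype.val ⁻¹' S) hyS⟩

theorem Finset.Nonempty.exists_isGreatest_of_isChain {α : Type*} [PartialOrder α]
    {s : Finset α} (hne : s.Nonempty) (hs : IsChain (· ≤ ·) (s : Set α)) :
    ∃ m, IsGreatest (s : Set α) m := by
  obtain ⟨m, hm, hmax⟩ := s.exists_maximal hne
  refine ⟨m, hm, fun a ha => ?_⟩
  rcases hs.total ha hm with h | h
  exacts [h, hmax ha h]

namespace OrderComplex

variable {A : Type*} [Fintype A]

local notation "𝔼" => Fin (Fintype.card A) → ℝ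

noncomputable def vertex (a : A) : 𝔼 := Pi.single (Fintype.equivFin A a) 1

noncomputable def supp (x : 𝔼) : Finset A := {a | 0 < x (Fintype.equivFin A a)}

theorem mem_supp {x : 𝔼} {a : A} : a ∈ supp x ↔ 0 < x (Fintype.equivFin A a) := by
  simp [supp]

theorem supp_vertex (a : A) : supp (vertex a) = {a} := by
  ext b
  by_cases h : b = a <;> simp [mem_supp, vertex, h]

theorem supp_nonempty {x : 𝔼} (hx : x ∈ stdSimplex ℝ _) : (supp x).Nonempty := by
  by_contra h
  have hzero : ∀ i, x i = 0 := fun i =>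
    le_antisymm (not_lt.1 fun hi => h ⟨(Fintype.equivFin A).symm i, by simpa [mem_supp]⟩)
      (hx.1 i)
  simpa [hzero] using hx.2

theorem supp_subset_iff {x : 𝔼} (hx : x ∈ stdSimplex ℝ _) {C : Finset A} :
    supp x ⊆ C ↔ ∀ a ∉ C, x (Fintype.equivFin A a) = 0 := by
  refine ⟨fun h a ha => ?_, fun h a ha => ?_⟩
  · exact le_antisymm (not_lt.1 fun hpos => ha (h (mem_supp.2 hpos))) (hx.1 _)
  · by_contra haC
    exact (mem_supp.1 ha).ne' (h a haC)

theorem mem_convexHull_vertex_iff (C : Finset A) {x : 𝔼} :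
    x ∈ convexHull ℝ (vertex '' (C : Set A)) ↔ x ∈ stdSimplex ℝ _ ∧ supp x ⊆ C := by
  let F : Set 𝔼 := {y | y ∈ stdSimplex ℝ _ ∧ ∀ a ∉ C, y (Fintype.equivFin A a) = 0}
  constructor
  · intro hx
    have hconv : Convex ℝ F :=
      (convex_stdSimplex ℝ _).inter fun y hy z hz s t _ _ _ a ha => by simp [hy a ha, hz a ha]
    have hvert : vertex '' (C : Set A) ⊆ F := by
      rintro _ ⟨b, hb, rfl⟩
      exact ⟨single_mem_stdSimplex ℝ _, fun a ha => Pi.single_eq_of_ne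
        ((Fintype.equivFin A).injective.ne (ne_of_mem_of_not_mem hb ha).symm) _⟩
    obtain ⟨hxs, hx0⟩ := convexHull_min hvert hconv hx
    exact ⟨hxs, (supp_subset_iff hxs).2 hx0⟩
  · rintro ⟨hxs, hxC⟩
    have hx0 := (supp_subset_iff hxs).1 hxC
    have hsum : ∑ a ∈ C, x (Fintype.equivFin A a) = 1 := by
      rw [Finset.sum_subset C.subset_univ fun a _ ha => hx0 a ha, (Fintype.equivFin A).sum_comp x,
        hxs.2]
    have hx : ∑ a ∈ C, x (Fintype.equivFin A a) • vertex a = x := by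
      rw [Finset.sum_subset C.subset_univ fun a _ ha => by simp [hx0 a ha]]
      simp only [vertex]
      rw [(Fintype.equivFin A).sum_comp fun i => x i • (Pi.single i 1 : 𝔼)]
      ext j
      simp [Finset.sum_apply, Pi.single_apply]
    rw [← hx]
    exact (convex_convexHull ℝ _).sum_mem (fun a _ => hxs.1 _) hsum
      fun a ha => subset_convexHull ℝ _ ⟨a, ha, rfl⟩

theorem coe_supp_of_mem_openSegment {x y z : 𝔼} (hx : x ∈ stdSimplex ℝ _)
    (hy : y ∈ stdSimplex ℝ _) (hz : z ∈ openSegment ℝ x y) :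
    (supp z : Set A) = ↑(supp x) ∪ ↑(supp y) := by
  obtain ⟨s, t, hs, ht, -, rfl⟩ := hz
  ext a
  simp only [Finset.mem_coe, mem_union, mem_supp, Pi.add_apply, Pi.smul_apply, smul_eq_mul]
  have hxa := hx.1 (Fintype.equivFin A a)
  have hya := hy.1 (Fintype.equivFin A a)
  constructor
  · intro h
    by_contra! hle
    rw [le_antisymm hle.1 hxa, le_antisymm hle.2 hya] at h
    simp at h
  · rintro (h | h)
    · exact add_pos_of_pos_of_nonneg (mul_pos hs h) (mul_nonneg ht.le hya)
    · exact add_pos_of_nonneg_of_pos (mul_nonneg hs.le hxa) (mul_pos ht h)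

theorem affineIndependent_vertex : AffineIndependent ℝ (vertex : A → 𝔼) :=
  ((Pi.linearIndependent_single_one (Fin (Fintype.card A)) ℝ).comp _
    (Fintype.equivFin A).injective).affineIndependent

theorem vertex_injective : Function.Injective (vertex : A → 𝔼) :=
  affineIndependent_vertex.injective

variable [PartialOrder A]

variable (A) in
def realization : Set 𝔼 := {x | x ∈ stdSimplex ℝ _ ∧ IsChain (· ≤ ·) (supp x : Set A)}

def subcomplex (L : Set A) : Set 𝔼 := {x ∈ realization A | ↑(supp x) ⊆ L}

def starOf (U : Set A) : Set 𝔼 := realization A \ subcomplex Uᶜ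

theorem subcomplex_eq_biUnion (L : Set A) :
    subcomplex L = ⋃ C ∈ {C : Finset A | IsChain (· ≤ ·) (C : Set A) ∧ ↑C ⊆ L},
      convexHull ℝ (vertex '' (C : Set A)) := by
  ext x
  simp only [mem_iUnion, mem_ofPred_eq, mem_convexHull_vertex_iff, exists_prop]
  constructor
  · rintro ⟨⟨hxs, hchain⟩, hxL⟩
    exact ⟨supp x, ⟨hchain, hxL⟩, hxs, subset_rfl⟩
  · rintro ⟨C, ⟨hC, hCL⟩, hxs, hxC⟩
    exact ⟨⟨hxs, hC.mono (Finset.coe_subset.2 hxC)⟩, (Finset.coe_subset.2 hxC).trans hCL⟩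

theorem isPolyhedron_subcomplex (L : Set A) : IsPolyhedron (subcomplex L) := by
  refine ⟨(fun C : Finset A => convexHull ℝ (vertex '' (C : Set A))) ''
      {C | IsChain (· ≤ ·) (C : Set A) ∧ ↑C ⊆ L}, (toFinite _).image _, ?_,
    by rw [sUnion_image, subcomplex_eq_biUnion]⟩
  rintro _ ⟨C, -, rfl⟩
  exact ⟨C.image vertex, by rw [Finset.coe_image]⟩

theorem subcomplex_univ : subcomplex (univ : Set A) = realization A := by
  simp [subcomplex]

theorem isPolyhedron_realization : IsPolyhedron (realization A) :=
  subcomplex_univ (A := A) ▸ isPolyhedron_subcomplex univ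

theorem mem_starOf {U : Set A} {x : 𝔼} :
    x ∈ starOf U ↔ x ∈ realization A ∧ ∃ a ∈ supp x, a ∈ U := by
  simp [starOf, subcomplex, not_subset]

theorem starOf_mono {U V : Set A} (h : U ⊆ V) : starOf U ⊆ starOf V :=
  sdiff_subset_sdiff_right fun _ hx => ⟨hx.1, hx.2.trans (compl_subset_compl.2 h)⟩

theorem realization_diff_starOf (U : Set A) : realization A \ starOf U = subcomplex Uᶜ :=
  sdiff_sdiff_cancel_left (sep_subset _ _)

theorem isOpenSubpoly_starOf (U : Set A) : IsOpenSubpoly (realization A) (starOf U) :=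
  ⟨sdiff_subset, realization_diff_starOf U ▸ isPolyhedron_subcomplex Uᶜ⟩

theorem starOf_subset_intSub (U : Set A) : starOf U ⊆ intSub (realization A) (starOf U) :=
  diff_subset_intSub_diff (isPolyhedron_subcomplex Uᶜ).isClosed

theorem starOf_empty : starOf (∅ : Set A) = ∅ := by
  simp [starOf, subcomplex_univ]

theorem starOf_univ : starOf (univ : Set A) = realization A := by
  ext x
  simp only [mem_starOf, mem_univ, and_true, and_iff_left_iff_imp]
  exact fun hx => supp_nonempty hx.1

theorem starOf_union (U V : Set A) : starOf (U ∪ V) = starOf U ∪ starOf V := by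
  ext x
  simp only [mem_starOf, mem_union]
  constructor
  · rintro ⟨hx, a, ha, haU | haV⟩
    exacts [Or.inl ⟨hx, a, ha, haU⟩, Or.inr ⟨hx, a, ha, haV⟩]
  · rintro (⟨hx, a, ha, haU⟩ | ⟨hx, a, ha, haV⟩)
    exacts [⟨hx, a, ha, Or.inl haU⟩, ⟨hx, a, ha, Or.inr haV⟩]

theorem starOf_inter {U V : Set A} (hU : IsUpperSet U) (hV : IsUpperSet V) :
    starOf (U ∩ V) = starOf U ∩ starOf V := by
  refine (subset_inter (starOf_mono inter_subset_left) (starOf_mono inter_subset_right)).antisymm ?_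
  rintro x ⟨hxU, hxV⟩
  obtain ⟨hx, a, ha, haU⟩ := mem_starOf.1 hxU
  obtain ⟨-, b, hb, hbV⟩ := mem_starOf.1 hxV
  rcases hx.2.total ha hb with hab | hba
  · exact mem_starOf.2 ⟨hx, b, hb, hU hab haU, hbV⟩
  · exact mem_starOf.2 ⟨hx, a, ha, haU, hV hba hbV⟩

theorem vertex_mem_realization (a : A) : vertex a ∈ realization A :=
  ⟨single_mem_stdSimplex ℝ _, by simp [supp_vertex]⟩

theorem vertex_mem_starOf_iff {U : Set A} {a : A} : vertex a ∈ starOf U ↔ a ∈ U := by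
  simp [mem_starOf, supp_vertex, vertex_mem_realization]

theorem starOf_injective : Function.Injective (starOf : Set A → Set 𝔼) := fun U V h =>
  ext fun a => by rw [← vertex_mem_starOf_iff, h, vertex_mem_starOf_iff]

theorem openSegment_vertex_subset_realization {x : 𝔼} (hx : x ∈ realization A) {b : A}
    (hb : ∀ a ∈ supp x, a ≤ b) : openSegment ℝ x (vertex b) ⊆ realization A := by
  intro y hy
  have hys : y ∈ stdSimplex ℝ _ :=
    (convex_stdSimplex ℝ _).openSegment_subset hx.1 (vertex_mem_realization b).1 hy
  refine ⟨hys, ?_⟩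
  rw [coe_supp_of_mem_openSegment hx.1 (vertex_mem_realization b).1 hy, supp_vertex,
    Finset.coe_singleton, union_singleton]
  exact hx.2.insert fun a ha _ => Or.inr (hb a ha)

theorem starOf_himp_subset {U V : Set A} (hU : IsUpperSet U) :
    starOf {a | ∀ b, a ≤ b → b ∈ U → b ∈ V} ⊆
      intSub (realization A) ((realization A \ starOf U) ∪ starOf V) := by
  set W := {a | ∀ b, a ≤ b → b ∈ U → b ∈ V}
  have hW : IsUpperSet W := fun a a' haa' ha b hb => ha b (haa'.trans hb)
  refine (starOf_subset_intSub W).trans (intSub_mono fun x hx => ?_)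
  by_cases hxU : x ∈ starOf U
  · have hWU : W ∩ U ⊆ V := fun a ha => ha.1 a le_rfl ha.2
    exact Or.inr (starOf_mono hWU ((starOf_inter hW hU).symm ▸ ⟨hx, hxU⟩))
  · exact Or.inl ⟨hx.1, hxU⟩

theorem intSub_subset_starOf_himp {U V : Set A} (hV : IsUpperSet V) :
    intSub (realization A) ((realization A \ starOf U) ∪ starOf V) ⊆
      starOf {a | ∀ b, a ≤ b → b ∈ U → b ∈ V} := by
  intro x hx
  have hxP : x ∈ realization A := intSub_subset _ _ hx
  obtain ⟨m, hm, hmax⟩ := (supp_nonempty hxP.1).exists_isGreatest_of_isChain hxP.2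
  refine mem_starOf.2 ⟨hxP, m, hm, fun b hmb hbU => ?_⟩
  by_contra hbV
  have hle : ∀ a ∈ supp x, a ≤ b := fun a ha => (hmax ha).trans hmb
  obtain ⟨y, hyT, hyS⟩ := inter_nonempty_of_mem_intSub hx
    (openSegment_vertex_subset_realization hxP hle)
    (segment_subset_closure_openSegment (left_mem_segment ℝ x (vertex b)))
  have hy : (supp y : Set A) = ↑(supp x) ∪ {b} := by
    rw [coe_supp_of_mem_openSegment hxP.1 (vertex_mem_realization b).1 hyT, supp_vertex,
      Finset.coe_singleton]
  rcases hyS with ⟨hyP, hyU⟩ | hyV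
  · have hb : b ∈ (supp y : Set A) := hy ▸ Or.inr rfl
    exact hyU (mem_starOf.2 ⟨hyP, b, hb, hbU⟩)
  · obtain ⟨-, c, hc, hcV⟩ := mem_starOf.1 hyV
    rw [← Finset.mem_coe, hy, mem_union, mem_singleton_iff] at hc
    rcases hc with hc | rfl
    exacts [hbV (hV (hle c hc) hcV), hbV hcV]

theorem starOf_himp {U V : Set A} (hU : IsUpperSet U) (hV : IsUpperSet V) :
    starOf {a | ∀ b, a ≤ b → b ∈ U → b ∈ V} =
      intSub (realization A) ((realization A \ starOf U) ∪ starOf V) :=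
  (starOf_himp_subset hU).antisymm (intSub_subset_starOf_himp hV)

theorem exists_simplex_of_isChain {C : Finset A} (hC : IsChain (· ≤ ·) (C : Set A)) :
    ∃ V : Finset 𝔼, AffineIndependent ℝ (fun v : {v // v ∈ V} => v.val) ∧
      convexHull ℝ (V : Set 𝔼) ⊆ realization A ∧ V.card = C.card := by
  refine ⟨C.image vertex, affineIndependent_vertex.range.mono ?_, fun x hx => ?_,
    Finset.card_image_of_injective _ vertex_injective⟩
  · rw [Finset.coe_image]
    exact image_subset_range _ _
  · rw [Finset.coe_image, mem_convexHull_vertex_iff] at hx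
    exact ⟨hx.1, hC.mono (Finset.coe_subset.2 hx.2)⟩

theorem exists_chain_card_le {V : Finset 𝔼}
    (hV : AffineIndependent ℝ (fun v : {v // v ∈ V} => v.val))
    (hVP : convexHull ℝ (V : Set 𝔼) ⊆ realization A) :
    ∃ C : Finset A, IsChain (· ≤ ·) (C : Set A) ∧ V.card ≤ C.card := by
  rcases V.eq_empty_or_nonempty with rfl | hne
  · exact ⟨∅, by simp, by simp⟩
  have hw : (0 : ℝ) < (V.card : ℝ)⁻¹ := by simpa using hne.card_pos
  let c : 𝔼 := ∑ v ∈ V, (V.card : ℝ)⁻¹ • v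
  have hc : c ∈ realization A := hVP <| (convex_convexHull ℝ _).sum_mem (fun _ _ => hw.le)
    (by simp [hne.card_pos.ne']) fun v hv => subset_convexHull ℝ _ hv
  have hmem : ∀ v ∈ V, v ∈ realization A := fun v hv => hVP (subset_convexHull ℝ _ hv)
  have hsupp : ∀ v ∈ V, supp v ⊆ supp c := by
    intro v hv a ha
    rw [mem_supp] at ha ⊢
    calc 0 < (V.card : ℝ)⁻¹ * v (Fintype.equivFin A a) := mul_pos hw ha
      _ ≤ c (Fintype.equivFin A a) := by
        simp only [c, Finset.sum_apply, Pi.smul_apply, smul_eq_mul]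
        exact Finset.single_le_sum
          (f := fun w : 𝔼 => (V.card : ℝ)⁻¹ * w (Fintype.equivFin A a))
          (fun w hw' => mul_nonneg hw.le ((hmem w hw').1.1 _)) hv
  have hVC : (V : Set 𝔼) ⊆ convexHull ℝ (vertex '' ((supp c : Finset A) : Set A)) :=
    fun v hv => (mem_convexHull_vertex_iff _).2 ⟨(hmem v hv).1, hsupp v hv⟩
  refine ⟨supp c, hc.2, ?_⟩
  calc V.card ≤ ((supp c).image vertex).card := hV.card_le_card_of_subset_affineSpan <| by
        rw [Finset.coe_image]; exact hVC.trans (convexHull_subset_affineSpan _)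
    _ ≤ (supp c).card := Finset.card_image_le

end OrderComplex

theorem upperSets_embed_polyhedron_general {A : Type} [PartialOrder A] [Fintype A]
    {d : ℕ} (hd : depthEq A d) :
    ∃ (n : ℕ) (P : Set (Fin n → ℝ)) (g : Set A → Set (Fin n → ℝ)),
      IsPolyhedron P ∧ P.Nonempty ∧ PolyDimEq P d ∧
      (∀ U : Set A, IsUpperSet U → IsOpenSubpoly P (g U)) ∧
      (∀ U V : Set A, IsUpperSet U → IsUpperSet V → g U = g V → U = V) ∧
      g ∅ = ∅ ∧ g Set.univ = P ∧
      (∀ U V : Set A, IsUpperSet U → IsUpperSet V → g (U ∪ V) = g U ∪ g V) ∧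
      (∀ U V : Set A, IsUpperSet U → IsUpperSet V → g (U ∩ V) = g U ∩ g V) ∧
      (∀ U V : Set A, IsUpperSet U → IsUpperSet V →
        g {a | ∀ b, a ≤ b → b ∈ U → b ∈ V} = intSub P ((P \ g U) ∪ g V)) := by
  open OrderComplex in
  obtain ⟨⟨C, hC, hCcard⟩, hdepth⟩ := hd
  obtain ⟨V, hVind, hVP, hVcard⟩ := exists_simplex_of_isChain hC
  have hVne : V.Nonempty := Finset.card_pos.1 (by omega)
  refine ⟨_, realization A, starOf, isPolyhedron_realization, ?_,
    ⟨⟨V, hVne, hVind, hVP, hVcard.trans hCcard⟩, fun W hW hWP => ?_⟩,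
    fun U _ => isOpenSubpoly_starOf U, fun U V _ _ h => starOf_injective h, starOf_empty,
    starOf_univ, fun U V _ _ => starOf_union U V, fun U V hU hV => starOf_inter hU hV,
    fun U V hU hV => starOf_himp hU hV⟩
  · obtain ⟨v, hv⟩ := hVne
    exact ⟨v, hVP (subset_convexHull ℝ _ hv)⟩
  · obtain ⟨C', hC', hle⟩ := exists_chain_card_le hW hWP
    exact hle.trans (hdepth C' hC')

/-- For every finite nonempty poset `A` (of depth `d`) there are `n ∈ ℕ`,
a polyhedron `P ⊆ ℝⁿ` with `dim P = depth A`, and an injective map `g` from the upper sets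
of `A` to the open subpolyhedra of `P` preserving `∅`, the top element, binary unions,
binary intersections, and Heyting implication; i.e. the Heyting algebra of upper sets of `A`
embeds into the Heyting algebra of open subpolyhedra of a polyhedron whose dimension is the
depth of `A`. -/
theorem upperSets_embed_polyhedron {A : Type} [PartialOrder A] [Fintype A] [Nonempty A]
    {d : ℕ} (hd : depthEq A d) :
    ∃ (n : ℕ) (P : Set (Fin n → ℝ)) (g : Set A → Set (Fin n → ℝ)),
      IsPolyhedron P ∧ P.Nonempty ∧ PolyDimEq P d ∧
      (∀ U : Set A, IsUpperSet U → IsOpenSubpoly P (g U)) ∧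
      (∀ U V : Set A, IsUpperSet U → IsUpperSet V → g U = g V → U = V) ∧
      g ∅ = ∅ ∧ g Set.univ = P ∧
      (∀ U V : Set A, IsUpperSet U → IsUpperSet V → g (U ∪ V) = g U ∪ g V) ∧
      (∀ U V : Set A, IsUpperSet U → IsUpperSet V → g (U ∩ V) = g U ∩ g V) ∧
      (∀ U V : Set A, IsUpperSet U → IsUpperSet V →
        g {a | ∀ b, a ≤ b → b ∈ U → b ∈ V} = intSub P ((P \ g U) ∪ g V)) :=
  upperSets_embed_polyhedron_general hd
end
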